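/- Let G be a König-Egerváry graph with vertex set V, let core(G) be the intersection of all maximum stable sets of G, and let N(core(G)) be the set of vertices adjacent to some vertex of core(G). Then |core(G)| ≥ |N(core(G))|, and for every maximum stable set S of G one has |S − core(G)| = |(V − S) − N(core(G))|. -/

import Mathlib

/-!
Fix a maximum matching `M`. For a maximum stable set `S`, every edge of `M` has an endpoint in
`V - S`, and `|V - S| = μ(G) = |M|` by the König-Egerváry property; so `M` matches `V - S` into
`S`. Unmatched vertices therefore lie in every maximum stable set, i.e. in `core(G)`, while a
vertex of `N(core(G))` lies in no maximum stable set, hence is matched and its mate lies in all of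
them. Thus the mate map is an involution exchanging `N(core(G))` with the matched part of
`core(G)`, which gives both claims.
-/

open scoped Classical

namespace KEG

variable {V : Type*}

/-- `S` is a stable (independent) set of vertices of `G`. -/
def IsStable (G : SimpleGraph V) (S : Finset V) : Prop :=
  ∀ ⦃x⦄, x ∈ S → ∀ ⦃y⦄, y ∈ S → ¬G.Adj x y

/-- The stability number `α(G)`: maximum cardinality of a stable set. -/
noncomputable def alphaNum (G : SimpleGraph V) : ℕ :=
  sSup {n | ∃ S : Finset V, IsStable G S ∧ S.card = n}

/-- `S` is a maximum stable set of `G`. -/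
def IsMaxStable (G : SimpleGraph V) (S : Finset V) : Prop :=
  IsStable G S ∧ S.card = alphaNum G

/-- `M` is a matching of `G`: a set of edges of `G`, pairwise non-incident. -/
def IsMatching (G : SimpleGraph V) (M : Finset (Sym2 V)) : Prop :=
  (∀ e ∈ M, e ∈ G.edgeSet) ∧
    ∀ e ∈ M, ∀ f ∈ M, e ≠ f → ∀ v : V, v ∈ e → v ∉ f

/-- The matching number `μ(G)`: maximum cardinality of a matching. -/
noncomputable def muNum (G : SimpleGraph V) : ℕ :=
  sSup {n | ∃ M : Finset (Sym2 V), IsMatching G M ∧ M.card = n}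

/-- A perfect matching: a matching covering every vertex. -/
def IsPerfectMatching (G : SimpleGraph V) (M : Finset (Sym2 V)) : Prop :=
  IsMatching G M ∧ ∀ v : V, ∃ e ∈ M, v ∈ e

/-- A maximal matching: a matching such that no edge of `G` can be added to it
while keeping pairwise non-incidence, i.e. every edge of `G` outside `M` is
incident to an edge of `M`. -/
def IsMaximalMatching (G : SimpleGraph V) (M : Finset (Sym2 V)) : Prop :=
  IsMatching G M ∧ ∀ e ∈ G.edgeSet, e ∉ M → ∃ f ∈ M, ∃ v : V, v ∈ e ∧ v ∈ f

/-- `G` is a König-Egerváry graph: `α(G) + μ(G) = |V(G)|`. -/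
def KonigEgervary (G : SimpleGraph V) [Fintype V] : Prop :=
  alphaNum G + muNum G = Fintype.card V

/-- `e` is an α-critical edge of `G`: `α(G - e) > α(G)`. -/
def IsAlphaCritical (G : SimpleGraph V) (e : Sym2 V) : Prop :=
  e ∈ G.edgeSet ∧ alphaNum G < alphaNum (G.deleteEdges {e})

/-- `e` is a μ-critical edge of `G`: `μ(G - e) < μ(G)`. -/
def IsMuCritical (G : SimpleGraph V) (e : Sym2 V) : Prop :=
  e ∈ G.edgeSet ∧ muNum (G.deleteEdges {e}) < muNum G

/-- `core(G)`: the set of vertices belonging to every maximum stable set of `G`. -/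
def core (G : SimpleGraph V) : Set V :=
  {v | ∀ S : Finset V, IsMaxStable G S → v ∈ S}

/-- `ξ(G) = |core(G)|`. -/
noncomputable def xi (G : SimpleGraph V) : ℕ := (core G).ncard

/-- `σ(G)`: the number of vertices belonging to no maximum stable set of `G`. -/
noncomputable def sigmaNum (G : SimpleGraph V) : ℕ :=
  {v : V | ∀ S : Finset V, IsMaxStable G S → v ∉ S}.ncard

/-- `η(G)`: the number of α-critical edges of `G`. -/
noncomputable def eta (G : SimpleGraph V) : ℕ :=
  {e : Sym2 V | IsAlphaCritical G e}.ncard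

/-- `N(A)`: the set of vertices adjacent to some vertex of `A`. -/
def nbhd (G : SimpleGraph V) (A : Set V) : Set V :=
  {v | ∃ a ∈ A, G.Adj a v}

/-- `N[A] = A ∪ N(A)`: the closed neighborhood of `A`. -/
def closedNbhd (G : SimpleGraph V) (A : Set V) : Set V :=
  A ∪ nbhd G A

section Existence

variable [Fintype V] (G : SimpleGraph V)

theorem exists_isMaxStable : ∃ S : Finset V, IsMaxStable G S :=
  Nat.sSup_mem (s := {n | ∃ S : Finset V, IsStable G S ∧ S.card = n})
    ⟨0, ∅, fun x hx => by simp at hx, rfl⟩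
    ⟨Fintype.card V, by rintro n ⟨S, -, rfl⟩; exact S.card_le_univ⟩

theorem exists_isMatching_card_eq_muNum :
    ∃ M : Finset (Sym2 V), IsMatching G M ∧ M.card = muNum G :=
  Nat.sSup_mem (s := {n | ∃ M : Finset (Sym2 V), IsMatching G M ∧ M.card = n})
    ⟨0, ∅, ⟨by simp, by simp⟩, rfl⟩
    ⟨Fintype.card (Sym2 V), by rintro n ⟨M, -, rfl⟩; exact M.card_le_univ⟩

end Existence

section Matching

variable {G : SimpleGraph V} {M : Finset (Sym2 V)}

theorem IsMatching.eq_of_mem_of_mem (hM : IsMatching G M) {e f : Sym2 V} (he : e ∈ M)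
    (hf : f ∈ M) {v : V} (hve : v ∈ e) (hvf : v ∈ f) : e = f := by
  by_contra hne
  exact hM.2 e he f hf hne v hve hvf

/-- Choosing for each edge an endpoint in `T` is injective, hence a bijection `M → T`. -/
theorem IsMatching.saturates_of_card_le (hM : IsMatching G M) {T : Finset V}
    (hMT : ∀ e ∈ M, ∃ v ∈ T, v ∈ e) (hcard : T.card ≤ M.card) :
    (∀ v ∈ T, ∃ e ∈ M, v ∈ e) ∧ ∀ x y, s(x, y) ∈ M → x ∈ T → y ∉ T := by
  choose f hfT hfe using hMT
  have hsurj : ∀ v ∈ T, ∃ e he, v = f e he :=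
    Finset.surj_on_of_inj_on_of_card_le f hfT
      (fun e₁ e₂ h₁ h₂ h => hM.eq_of_mem_of_mem h₁ h₂ (hfe e₁ h₁) (h ▸ hfe e₂ h₂)) hcard
  have hchoice : ∀ v ∈ T, ∀ e (he : e ∈ M), v ∈ e → v = f e he := by
    intro v hv e he hve
    obtain ⟨e', he', rfl⟩ := hsurj v hv
    obtain rfl := hM.eq_of_mem_of_mem he he' hve (hfe e' he')
    rfl
  refine ⟨fun v hv => ?_, fun x y hxy hx hy => ?_⟩
  · obtain ⟨e, he, rfl⟩ := hsurj v hv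
    exact ⟨e, he, hfe e he⟩
  · have hne : x ≠ y := (G.mem_edgeSet.1 (hM.1 _ hxy)).ne
    exact hne ((hchoice x hx _ hxy (Sym2.mem_mk_left x y)).trans
      (hchoice y hy _ hxy (Sym2.mem_mk_right x y)).symm)

def Matched (M : Finset (Sym2 V)) (v : V) : Prop := ∃ w, s(v, w) ∈ M

theorem matched_of_mem {e : Sym2 V} (he : e ∈ M) {v : V} (hv : v ∈ e) : Matched M v := by
  obtain ⟨w, rfl⟩ := Sym2.mem_iff_exists.1 hv
  exact ⟨w, he⟩

/-- Junk value `v` when `v` is unmatched. -/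
noncomputable def mate (M : Finset (Sym2 V)) (v : V) : V :=
  if h : Matched M v then h.choose else v

theorem mk_mate_mem {v : V} (hv : Matched M v) : s(v, mate M v) ∈ M := by
  rw [mate, dif_pos hv]
  exact hv.choose_spec

theorem IsMatching.mate_eq (hM : IsMatching G M) {v w : V} (h : s(v, w) ∈ M) : mate M v = w := by
  have := hM.eq_of_mem_of_mem (mk_mate_mem ⟨w, h⟩) h (Sym2.mem_mk_left _ _) (Sym2.mem_mk_left _ _)
  rcases Sym2.eq_iff.1 this with ⟨-, h'⟩ | ⟨hvw, h'⟩
  exacts [h', h'.trans hvw]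

theorem IsMatching.mate_mate (hM : IsMatching G M) {v : V} (hv : Matched M v) :
    mate M (mate M v) = v :=
  hM.mate_eq (Sym2.eq_swap ▸ mk_mate_mem hv)

theorem IsMatching.injOn_mate (hM : IsMatching G M) : Set.InjOn (mate M) {v | Matched M v} :=
  fun v hv w hw h => by rw [← hM.mate_mate hv, h, hM.mate_mate hw]

theorem IsMatching.adj_mate (hM : IsMatching G M) {v : V} (hv : Matched M v) :
    G.Adj v (mate M v) :=
  G.mem_edgeSet.1 (hM.1 _ (mk_mate_mem hv))

end Matching

theorem not_mem_of_mem_nbhd_core {G : SimpleGraph V} {v : V} (hv : v ∈ nbhd G (core G))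
    {S : Finset V} (hS : IsMaxStable G S) : v ∉ S := by
  obtain ⟨a, ha, hav⟩ := hv
  exact fun hvS => hS.1 (ha S hS) hvS hav

namespace KonigEgervary

variable [Fintype V] {G : SimpleGraph V} (hG : KonigEgervary G) {M : Finset (Sym2 V)}
  (hM : IsMatching G M) (hMc : M.card = muNum G)
include hG hM hMc

theorem matched_and_mate_mem_of_not_mem {S : Finset V} (hS : IsMaxStable G S) :
    (∀ v ∉ S, Matched M v) ∧ ∀ v ∉ S, mate M v ∈ S := by
  have hMT : ∀ e ∈ M, ∃ v ∈ Finset.univ \ S, v ∈ e := by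
    intro e he
    induction e using Sym2.ind with
    | _ x y =>
      by_cases hx : x ∈ S
      · refine ⟨y, Finset.mem_sdiff.2 ⟨Finset.mem_univ _, fun hy => ?_⟩, Sym2.mem_mk_right x y⟩
        exact hS.1 hx hy (G.mem_edgeSet.1 (hM.1 _ he))
      · exact ⟨x, Finset.mem_sdiff.2 ⟨Finset.mem_univ _, hx⟩, Sym2.mem_mk_left x y⟩
  have hcard : (Finset.univ \ S).card ≤ M.card := by
    rw [Finset.card_univ_sdiff, hS.2, hMc]
    unfold KonigEgervary at hG
    omega
  obtain ⟨hsat, hone⟩ := hM.saturates_of_card_le hMT hcard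
  have hmatched : ∀ v ∉ S, Matched M v := fun v hv => by
    obtain ⟨e, he, hve⟩ := hsat v (by simpa using hv)
    exact matched_of_mem he hve
  refine ⟨hmatched, fun v hv => by_contra fun h => ?_⟩
  exact hone v _ (mk_mate_mem (hmatched v hv)) (by simpa using hv) (by simpa using h)

theorem mem_core_of_not_matched {v : V} (hv : ¬Matched M v) : v ∈ core G := by
  intro S hS
  by_contra hvS
  exact hv ((hG.matched_and_mate_mem_of_not_mem hM hMc hS).1 v hvS)

theorem matched_of_mem_nbhd_core {v : V} (hv : v ∈ nbhd G (core G)) : Matched M v := by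
  by_contra h
  obtain ⟨S, hS⟩ := exists_isMaxStable G
  exact not_mem_of_mem_nbhd_core hv hS (hG.mem_core_of_not_matched hM hMc h S hS)

theorem mate_mem_core_of_mem_nbhd_core {v : V} (hv : v ∈ nbhd G (core G)) :
    mate M v ∈ core G := fun _ hS =>
  (hG.matched_and_mate_mem_of_not_mem hM hMc hS).2 v (not_mem_of_mem_nbhd_core hv hS)

theorem ncard_nbhd_core_le : (nbhd G (core G)).ncard ≤ (core G).ncard :=
  Set.ncard_le_ncard_of_injOn (mate M) (fun _ hv => hG.mate_mem_core_of_mem_nbhd_core hM hMc hv)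
    (hM.injOn_mate.mono fun _ hv => hG.matched_of_mem_nbhd_core hM hMc hv)

/-- `mate M` is a bijection `S - core(G) → (V - S) - N(core(G))`, being an involution that
exchanges `core(G)` and `N(core(G))`. -/
theorem ncard_sdiff_core_eq {S : Finset V} (hS : IsMaxStable G S) :
    ((S : Set V) \ core G).ncard = ((S : Set V)ᶜ \ nbhd G (core G)).ncard := by
  refine Set.ncard_congr (fun v _ => mate M v) (fun v ⟨hvS, hv⟩ => ?_)
    (fun v w hv hw h => hM.injOn_mate ?_ ?_ h) (fun w ⟨hwS, hw⟩ => ?_)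
  · have hvM : Matched M v := by_contra fun h => hv (hG.mem_core_of_not_matched hM hMc h)
    refine ⟨fun h => hS.1 hvS h (hM.adj_mate hvM), fun h => hv ?_⟩
    simpa only [hM.mate_mate hvM] using hG.mate_mem_core_of_mem_nbhd_core hM hMc h
  · exact by_contra fun h => hv.2 (hG.mem_core_of_not_matched hM hMc h)
  · exact by_contra fun h => hw.2 (hG.mem_core_of_not_matched hM hMc h)
  · have hwM : Matched M w := (hG.matched_and_mate_mem_of_not_mem hM hMc hS).1 w hwS
    refine ⟨mate M w, ⟨(hG.matched_and_mate_mem_of_not_mem hM hMc hS).2 w hwS, fun h => hw ?_⟩,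
      hM.mate_mate hwM⟩
    exact ⟨mate M w, h, (hM.adj_mate hwM).symm⟩

end KonigEgervary

/-- In a König-Egerváry graph `G`, `|core(G)| ≥ |N(core(G))|`, and for every
maximum stable set `S`, `|S - core(G)| = |(V - S) - N(core(G))|`. -/
theorem stmt_8 {V : Type*} [Fintype V] (G : SimpleGraph V)
    (hG : KonigEgervary G) :
    (nbhd G (core G)).ncard ≤ (core G).ncard ∧
      ∀ S : Finset V, IsMaxStable G S →
        ((S : Set V) \ core G).ncard = ((↑S : Set V)ᶜ \ nbhd G (core G)).ncard := by
  obtain ⟨M, hM, hMc⟩ := exists_isMatching_card_eq_muNum G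
  exact ⟨hG.ncard_nbhd_core_le hM hMc, fun S hS => hG.ncard_sdiff_core_eq hM hMc hS⟩

end KEG
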